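/- Let f be analytic on the open unit disk 𝔻 with f(0) = 0 and f'(0) = 1. If |f'(z) + (f(z)/z)² − 2| < 5/2 for all z ∈ 𝔻 \ {0}, then Re(f(z)/z) > 0 for all z ∈ 𝔻 \ {0}. -/

import Mathlib

/-!
Write `f z = z p(z)` with `p = dslope f 0`, so that `p 0 = 1` and
`f' + (f/z)² - 2 = p + z p' + p² - 2`. If `Re p` is not positive on the disk, take a point `z₁` of
least modulus where `Re p` vanishes, say `p z₁ = i b`. The Cayley transform `(1 - p)/(1 + p)` maps
the disk of radius `|z₁|` into the unit disk, vanishes at `0` and has modulus `1` at `z₁`; the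
Schwarz lemma along the radius through `z₁` (Jack's lemma) then yields
`Re (z₁ p'(z₁)) ≤ -(1 + b²)/2`. Hence `Re (f' + (f/z)² - 2) ≤ -(1 + b²)/2 - b² - 2 ≤ -5/2` at `z₁`,
contradicting the hypothesis.
-/

open Complex ComplexConjugate Metric Set

theorem exists_norm_minimal_nonpos {E : Type*} [NormedAddCommGroup E] [NormedSpace ℝ E]
    [ProperSpace E] {u : E → ℝ} {z₀ : E} (hu : ContinuousOn u (closedBall 0 ‖z₀‖))
    (hu0 : 0 < u 0) (hz₀ : u z₀ ≤ 0) :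
    ∃ z₁, ‖z₁‖ ≤ ‖z₀‖ ∧ u z₁ = 0 ∧ ∀ z, ‖z‖ < ‖z₁‖ → 0 < u z := by
  have hS : IsCompact (closedBall 0 ‖z₀‖ ∩ u ⁻¹' Iic 0) :=
    (isCompact_closedBall _ _).of_isClosed_subset
      (hu.preimage_isClosed_of_isClosed isClosed_closedBall isClosed_Iic) inter_subset_left
  obtain ⟨z₁, ⟨hz₁, hz₁u⟩, hmin⟩ :=
    hS.exists_isMinOn ⟨z₀, mem_closedBall_zero_iff.2 le_rfl, hz₀⟩ continuous_norm.continuousOn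
  rw [mem_closedBall_zero_iff] at hz₁
  have hpos : ∀ z, ‖z‖ < ‖z₁‖ → 0 < u z := fun z hz ↦ by
    by_contra! hzu
    exact (hmin ⟨mem_closedBall_zero_iff.2 (hz.le.trans hz₁), hzu⟩).not_gt hz
  have hz₁0 : ‖z₁‖ ≠ 0 := fun h ↦ by
    rw [norm_eq_zero] at h
    exact (hu0.trans_le (h ▸ hz₁u : u 0 ≤ 0)).false
  -- `u ≥ 0` on the open ball of radius `‖z₁‖`, hence on its closure
  have hclosure : closedBall (0 : E) ‖z₁‖ ⊆ closedBall 0 ‖z₀‖ ∩ u ⁻¹' Ici 0 := by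
    rw [← closure_ball _ hz₁0]
    refine closure_minimal (fun z hz ↦ ⟨?_, (hpos z (mem_ball_zero_iff.1 hz)).le⟩)
      (hu.preimage_isClosed_of_isClosed isClosed_closedBall isClosed_Ici)
    exact mem_closedBall_zero_iff.2 ((mem_ball_zero_iff.1 hz).le.trans hz₁)
  have := (hclosure (mem_closedBall_zero_iff.2 le_rfl)).2
  exact ⟨z₁, hz₁, le_antisymm hz₁u this, hpos⟩

/-- Weak form of Jack's lemma: `‖h (t z₁)‖² - t²` is `≤ 0` on `[0, 1]` by the Schwarz lemma and
vanishes at `t = 1`, so its derivative there is `≥ 0`. -/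
theorem one_le_re_mul_conj_of_mapsTo_ball {h : ℂ → ℂ} {r : ℝ} {z₁ h' : ℂ}
    (hd : DifferentiableOn ℂ h (ball 0 r)) (hmaps : MapsTo h (ball 0 r) (ball 0 1))
    (h0 : h 0 = 0) (hz₁ : ‖z₁‖ = r) (hder : HasDerivAt h h' z₁) (hhz₁ : ‖h z₁‖ = 1) :
    1 ≤ (z₁ * h' * conj (h z₁)).re := by
  have hr : 0 < r := by
    rcases (hz₁ ▸ norm_nonneg z₁).lt_or_eq with hr | hr
    · exact hr
    · rw [← hz₁, eq_comm, norm_eq_zero] at hr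
      simp [hr, h0] at hhz₁
  have hschwarz : ∀ t ∈ Ico (0 : ℝ) 1, ‖h (t * z₁)‖ ≤ t := fun t ht ↦ by
    have hmem : (t : ℂ) * z₁ ∈ ball 0 r := by
      rw [mem_ball_zero_iff, norm_mul, norm_real, Real.norm_of_nonneg ht.1, hz₁]
      nlinarith [ht.2]
    have := dist_le_div_mul_dist_of_mapsTo_ball hd
      (by rw [h0]; exact hmaps.mono_right ball_subset_closedBall) hmem
    rw [h0, dist_zero_right, dist_zero_right, norm_mul, norm_real, Real.norm_of_nonneg ht.1,
      hz₁] at this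
    exact this.trans_eq (by field_simp)
  set φ : ℝ → ℝ := fun t ↦ ‖h (t * z₁)‖ ^ 2 - t ^ 2
  have hmax : IsLocalMaxOn φ (Icc 0 1) 1 := by
    refine IsMaxOn.localize fun t ht ↦ ?_
    rcases ht.2.lt_or_eq with ht1 | rfl
    · have := hschwarz t ⟨ht.1, ht1⟩
      simp only [mem_ofPred_eq, φ, ofReal_one, one_mul, hhz₁]
      nlinarith [norm_nonneg (h (t * z₁))]
    · exact le_refl (φ 1)
  have hline : HasDerivAt (fun t : ℝ ↦ h (t * z₁)) (h' * z₁) 1 := by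
    have : HasDerivAt (fun ζ : ℂ ↦ h (ζ * z₁)) (h' * z₁) ((1 : ℝ) : ℂ) := by
      rw [ofReal_one]
      exact (one_mul z₁ ▸ hder).comp 1 (hasDerivAt_mul_const z₁)
    exact this.comp_ofReal
  have hφ : HasDerivAt φ (2 * (z₁ * h' * conj (h z₁)).re - 2) 1 := by
    refine (hline.norm_sq.sub (hasDerivAt_pow 2 (1 : ℝ))).congr_deriv ?_
    simp [Complex.inner, mul_comm]
  have := hmax.hasFDerivWithinAt_nonpos hφ.hasFDerivAt.hasFDerivWithinAt
    (y := -1) (mem_posTangentConeAt_of_segment_subset (by norm_num [segment_symm, segment_eq_Icc]))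
  rw [ContinuousLinearMap.toSpanSingleton_apply, neg_one_smul, neg_nonpos] at this
  linarith

noncomputable def cayley (w : ℂ) : ℂ := (1 - w) / (1 + w)

theorem one_add_ne_zero_of_re_nonneg {w : ℂ} (hw : 0 ≤ w.re) : 1 + w ≠ 0 := fun h ↦ by
  have := congrArg re h
  simp only [add_re, one_re, zero_re] at this
  linarith

theorem norm_cayley_lt_one {w : ℂ} (hw : 0 < w.re) : ‖cayley w‖ < 1 := by
  rw [cayley, norm_div, div_lt_one (norm_pos_iff.2 (one_add_ne_zero_of_re_nonneg hw.le)),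
    ← sq_lt_sq₀ (norm_nonneg _) (norm_nonneg _), Complex.sq_norm, Complex.sq_norm,
    normSq_apply, normSq_apply]
  simp only [sub_re, sub_im, add_re, add_im, one_re, one_im]
  nlinarith

theorem one_sub_eq_conj_one_add {c : ℂ} (hc : c.re = 0) : 1 - c = conj (1 + c) := by
  apply Complex.ext <;> simp [hc]

theorem norm_cayley_of_re_eq_zero {c : ℂ} (hc : c.re = 0) : ‖cayley c‖ = 1 := by
  rw [cayley, one_sub_eq_conj_one_add hc, norm_div, norm_conj,
    div_self (norm_ne_zero_iff.2 (one_add_ne_zero_of_re_nonneg hc.ge))]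

theorem HasDerivAt.cayley {p : ℂ → ℂ} {p' z : ℂ} (hp : HasDerivAt p p' z) (hz : 1 + p z ≠ 0) :
    HasDerivAt (fun z ↦ cayley (p z)) (-2 * p' / (1 + p z) ^ 2) z := by
  refine ((hp.const_sub 1).div (hp.const_add 1) hz).congr_deriv ?_
  ring

theorem re_mul_cayley_deriv_mul_conj {c : ℂ} (hc : c.re = 0) (z p' : ℂ) :
    (z * (-2 * p' / (1 + c) ^ 2) * conj (cayley c)).re = -2 * (z * p').re / (1 + c.im ^ 2) := by
  have ha : 1 + c ≠ 0 := one_add_ne_zero_of_re_nonneg hc.ge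
  have hconj : conj (1 + c) ≠ 0 := (map_ne_zero _).2 ha
  have hnormSq : normSq (1 + c) = 1 + c.im ^ 2 := by simp [normSq_apply, hc, sq]
  rw [cayley, one_sub_eq_conj_one_add hc, map_div₀, conj_conj]
  have : z * (-2 * p' / (1 + c) ^ 2) * ((1 + c) / conj (1 + c))
      = -2 * (z * p') / (normSq (1 + c) : ℂ) := by
    rw [← mul_conj]
    field_simp
  rw [this, div_ofReal_re, hnormSq]
  simp

/-- The Miller–Mocanu lemma. -/
theorem exists_re_eq_zero_and_re_mul_deriv_le {p : ℂ → ℂ} (hp : DifferentiableOn ℂ p (ball 0 1))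
    (hp0 : p 0 = 1) {z₀ : ℂ} (hz₀ : z₀ ∈ ball 0 1) (hre : (p z₀).re ≤ 0) :
    ∃ z₁ ∈ ball (0 : ℂ) 1, (p z₁).re = 0 ∧ (z₁ * deriv p z₁).re ≤ -(1 + (p z₁).im ^ 2) / 2 := by
  have hz₀' : closedBall (0 : ℂ) ‖z₀‖ ⊆ ball 0 1 :=
    closedBall_subset_ball (mem_ball_zero_iff.1 hz₀)
  obtain ⟨z₁, hz₁z₀, hz₁re, hpos⟩ := exists_norm_minimal_nonpos (u := fun z ↦ (p z).re)
    (continuous_re.comp_continuousOn (hp.continuousOn.mono hz₀')) (by simp [hp0]) hre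
  have hz₁ : z₁ ∈ ball (0 : ℂ) 1 := hz₀' (mem_closedBall_zero_iff.2 hz₁z₀)
  have hball : ball (0 : ℂ) ‖z₁‖ ⊆ ball 0 1 :=
    ball_subset_ball (mem_ball_zero_iff.1 hz₁).le
  have hpos' : ∀ z ∈ ball (0 : ℂ) ‖z₁‖, 0 < (p z).re := fun z hz ↦ hpos z (mem_ball_zero_iff.1 hz)
  have hd : DifferentiableOn ℂ (fun z ↦ cayley (p z)) (ball 0 ‖z₁‖) :=
    ((hp.mono hball).const_sub 1).div ((hp.mono hball).const_add 1)
      fun z hz ↦ one_add_ne_zero_of_re_nonneg (hpos' z hz).le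
  have hmaps : MapsTo (fun z ↦ cayley (p z)) (ball 0 ‖z₁‖) (ball 0 1) := fun z hz ↦
    mem_ball_zero_iff.2 (norm_cayley_lt_one (hpos' z hz))
  have hder := ((hp.differentiableAt (isOpen_ball.mem_nhds hz₁)).hasDerivAt).cayley
    (one_add_ne_zero_of_re_nonneg hz₁re.ge)
  have := one_le_re_mul_conj_of_mapsTo_ball hd hmaps (by simp [cayley, hp0]) rfl hder
    (norm_cayley_of_re_eq_zero hz₁re)
  rw [re_mul_cayley_deriv_mul_conj hz₁re, le_div_iff₀ (by positivity)] at this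
  exact ⟨z₁, hz₁, hz₁re, by linarith⟩

theorem dslope_zero_eq_div {f : ℂ → ℂ} (hf0 : f 0 = 0) {z : ℂ} (hz : z ≠ 0) :
    dslope f 0 z = f z / z := by
  rw [dslope_of_ne _ hz, slope_def_field, hf0, sub_zero, sub_zero]

theorem stmt_4 (f : ℂ → ℂ)
    (hf : AnalyticOnNhd ℂ f (ball (0 : ℂ) 1))
    (hf0 : f 0 = 0) (hf'0 : deriv f 0 = 1)
    (hineq : ∀ z ∈ ball (0 : ℂ) 1, z ≠ 0 →
      ‖deriv f z + (f z / z) ^ 2 - 2‖ < 5 / 2) :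
    ∀ z ∈ ball (0 : ℂ) 1, z ≠ 0 → 0 < (f z / z).re := by
  obtain ⟨p, hpdef⟩ : ∃ p, p = dslope f 0 := ⟨_, rfl⟩
  have hp : DifferentiableOn ℂ p (ball 0 1) :=
    hpdef ▸ (differentiableOn_dslope (ball_mem_nhds _ one_pos)).2 hf.differentiableOn
  have hp0 : p 0 = 1 := by rw [hpdef, dslope_same, hf'0]
  have hfp : f = fun z ↦ z * p z := funext fun z ↦ by
    simpa [hpdef, hf0] using (sub_smul_dslope f 0 z).symm
  intro z hz hz0
  rw [← dslope_zero_eq_div hf0 hz0, ← hpdef]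
  by_contra! hre
  obtain ⟨z₁, hz₁, hre₁, hderiv₁⟩ := exists_re_eq_zero_and_re_mul_deriv_le hp hp0 hz hre
  have hz₁0 : z₁ ≠ 0 := by rintro rfl; simp [hp0] at hre₁
  have hf' : HasDerivAt f (1 * p z₁ + z₁ * deriv p z₁) z₁ :=
    hfp ▸ (hasDerivAt_id' z₁).mul (hp.differentiableAt (isOpen_ball.mem_nhds hz₁)).hasDerivAt
  have hre_expr : (deriv f z₁ + (f z₁ / z₁) ^ 2 - 2).re
      = (z₁ * deriv p z₁).re - (p z₁).im ^ 2 - 2 := by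
    rw [hf'.deriv, one_mul, ← dslope_zero_eq_div hf0 hz₁0, ← hpdef]
    simp [sq, hre₁, sub_eq_add_neg]
  have := (abs_re_le_norm _).trans_lt (hineq z₁ hz₁ hz₁0)
  rw [hre_expr, abs_lt] at this
  nlinarith [sq_nonneg (p z₁).im]
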